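/- Let Λ be an unbounded subset of ω₂ consisting of ordinals of cofinality ω₁, and M, N countable subsets of ω₂ with comparison point β_{M,N} = max(Λ_M ∩ Λ_N). Suppose α ≤ γ are ordinals with α ∈ M ∪ lim(M) and γ ∈ N ∪ lim(N), and Λ ∩ [α, γ] = ∅. Then γ < β_{M,N}. -/

import Mathlib

open Ordinal Cardinal Set

/-- `Λ_M`: the set of `β ∈ Λ` with `β = min(Λ \ sup(M ∩ β))`. -/
noncomputable def LambdaAt (Λ M : Set Ordinal) : Set Ordinal :=
  {β ∈ Λ | β = sInf {δ ∈ Λ | sSup (M ∩ Set.Iio β) ≤ δ}}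

def limPts (M : Set Ordinal) : Set Ordinal :=
  {γ | sSup (M ∩ Set.Iio γ) = γ ∧ 0 < γ}

/-!
Since `cf ω₂ > ω`, the countable set `M` is bounded below `ω₂`, so `α < ω₂` and, `Λ` being
unbounded, there is a least `β' ∈ Λ` with `α ≤ β'`. As `Λ` misses `[α, γ]`, `γ < β'`. Both
`sup (M ∩ β')` and `sup (N ∩ β')` lie in `[α, β']`, so `β'` is also the least element of `Λ` above
each of them: `β' ∈ Λ_M ∩ Λ_N`, hence `γ < β' ≤ β_{M,N}`.
-/

theorem Set.Countable.sSup_lt_of_aleph0_lt_cof {s : Set Ordinal.{u}} {a : Ordinal.{u}}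
    (hs : s.Countable) (ha : ℵ₀ < a.cof) (h : ∀ i ∈ s, i < a) : sSup s < a := by
  refine sSup_lt_of_lt_cof (hs.le_aleph0.trans_lt ?_) h
  rw [← lift_cof, ← lift_aleph0.{u + 1, u}, Cardinal.lift_lt]
  exact ha

theorem Cardinal.aleph0_lt_cof_ord_aleph_two : ℵ₀ < (ℵ_ 2).ord.cof := by
  rw [← one_add_one_eq_two, (isRegular_aleph_add_one 1).cof_ord]
  exact aleph0_lt_aleph_one.trans (aleph_lt_aleph.2 (by simp))

theorem lt_of_mem_union_limPts {P : Set Ordinal} {a x : Ordinal} (hP : P.Countable)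
    (hPa : P ⊆ Iio a) (ha : ℵ₀ < a.cof) (hx : x ∈ P ∪ limPts P) : x < a := by
  rcases hx with hxP | ⟨hx, -⟩
  · exact hPa hxP
  · rw [← hx]
    exact (hP.mono inter_subset_left).sSup_lt_of_aleph0_lt_cof ha fun i hi ↦ hPa hi.1

theorem le_sSup_inter_Iio_of_mem_union_limPts {P : Set Ordinal} {x b : Ordinal}
    (hx : x ∈ P ∪ limPts P) (hxb : x < b) : x ≤ sSup (P ∩ Iio b) := by
  have hbdd : BddAbove (P ∩ Iio b) := bddAbove_Iio.mono inter_subset_right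
  rcases hx with hxP | ⟨hx, -⟩
  · exact le_csSup hbdd ⟨hxP, hxb⟩
  · calc x = sSup (P ∩ Iio x) := hx.symm
      _ ≤ sSup (P ∩ Iio b) :=
        csSup_le_csSup' hbdd (inter_subset_inter_right _ (Iio_subset_Iio hxb.le))

theorem mem_LambdaAt_of_isLeast {Λ P : Set Ordinal} {a b : Ordinal}
    (hb : IsLeast {δ ∈ Λ | a ≤ δ} b) (ha : a ≤ sSup (P ∩ Iio b)) : b ∈ LambdaAt Λ P := by
  have hsup : sSup (P ∩ Iio b) ≤ b := csSup_le' fun _ hy ↦ hy.2.le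
  have hleast : IsLeast {δ ∈ Λ | sSup (P ∩ Iio b) ≤ δ} b :=
    ⟨⟨hb.1.1, hsup⟩, fun δ hδ ↦ hb.2 ⟨hδ.1, ha.trans hδ.2⟩⟩
  exact ⟨hb.1.1, hleast.csInf_eq.symm⟩

theorem lt_comparison_point_general (Λ : Set Ordinal)
    (hΛunbd : ∀ γ < (Cardinal.aleph 2).ord, ∃ β ∈ Λ, γ ≤ β)
    (M N : Set Ordinal) (hM : M.Countable) (hMsub : M ⊆ Set.Iio (Cardinal.aleph 2).ord)
    (β : Ordinal) (hβ : IsGreatest (LambdaAt Λ M ∩ LambdaAt Λ N) β)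
    (α γ : Ordinal) (hαγ : α ≤ γ)
    (hα : α ∈ M ∪ limPts M) (hγ : γ ∈ N ∪ limPts N)
    (hint : Λ ∩ Set.Icc α γ = ∅) :
    γ < β := by
  obtain ⟨δ, hδΛ, hαδ⟩ :=
    hΛunbd α (lt_of_mem_union_limPts hM hMsub aleph0_lt_cof_ord_aleph_two hα)
  obtain ⟨β', hβ'⟩ : ∃ β', IsLeast {δ ∈ Λ | α ≤ δ} β' := ⟨_, isLeast_csInf ⟨δ, hδΛ, hαδ⟩⟩
  have hγβ' : γ < β' := not_le.1 fun h ↦ hint.subset ⟨hβ'.1.1, hβ'.1.2, h⟩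
  have hβ'M : β' ∈ LambdaAt Λ M :=
    mem_LambdaAt_of_isLeast hβ' (le_sSup_inter_Iio_of_mem_union_limPts hα (hαγ.trans_lt hγβ'))
  have hβ'N : β' ∈ LambdaAt Λ N :=
    mem_LambdaAt_of_isLeast hβ' (hαγ.trans (le_sSup_inter_Iio_of_mem_union_limPts hγ hγβ'))
  exact hγβ'.trans_le (hβ.2 ⟨hβ'M, hβ'N⟩)

/-- If `α ≤ γ`, `α ∈ M ∪ lim(M)`, `γ ∈ N ∪ lim(N)` and `Λ ∩ [α,γ] = ∅`,
    then `γ < β_{M,N}`. -/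
theorem lt_comparison_point (Λ : Set Ordinal)
    (hΛsub : Λ ⊆ Set.Iio (Cardinal.aleph 2).ord)
    (hΛunbd : ∀ γ < (Cardinal.aleph 2).ord, ∃ β ∈ Λ, γ ≤ β)
    (hΛcof : ∀ β ∈ Λ, Ordinal.cof β = Cardinal.aleph 1)
    (M N : Set Ordinal) (hM : M.Countable) (hMsub : M ⊆ Set.Iio (Cardinal.aleph 2).ord)
    (hN : N.Countable) (hNsub : N ⊆ Set.Iio (Cardinal.aleph 2).ord)
    (β : Ordinal) (hβ : IsGreatest (LambdaAt Λ M ∩ LambdaAt Λ N) β)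
    (α γ : Ordinal) (hαγ : α ≤ γ)
    (hα : α ∈ M ∪ limPts M) (hγ : γ ∈ N ∪ limPts N)
    (hint : Λ ∩ Set.Icc α γ = ∅) :
    γ < β :=
  lt_comparison_point_general Λ hΛunbd M N hM hMsub β hβ α γ hαγ hα hγ hint
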